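/- The directed graph on four vertices v_1,v_2,v_3,v_4 whose arcs are exactly (v_1,v_2), (v_2,v_3), (v_2,v_4), (v_3,v_1), (v_3,v_2), (v_4,v_3) is an interval catch digraph (ICD) but is not a central interval catch digraph (CICD). -/
import Mathlib


variable {V : Type*}

/-- An interval catch digraph representation: each vertex `u` gets an interval
`[a u, b u]` and a point `p u` inside it, and for distinct `u, v` there is an arc from
`u` to `v` iff `p v ∈ [a u, b u]`. -/
def IsICDRep (D : V → V → Prop) (a b p : V → ℝ) : Prop :=
  (∀ u, a u ≤ b u) ∧ (∀ u, p u ∈ Set.Icc (a u) (b u)) ∧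
    ∀ u v : V, u ≠ v → (D u v ↔ p v ∈ Set.Icc (a u) (b u))

/-- An interval catch digraph. -/
def IsICD (D : V → V → Prop) : Prop := ∃ a b p : V → ℝ, IsICDRep D a b p

/-- A central interval catch digraph: an ICD representation where every point is the
center of its interval. -/
def IsCICD (D : V → V → Prop) : Prop :=
  ∃ a b : V → ℝ, IsICDRep D a b (fun u => (a u + b u) / 2)

/-- The digraph on vertices `0, 1, 2, 3` (representing `v₁, v₂, v₃, v₄`) with arcs
exactly `(v₁,v₂), (v₂,v₃), (v₂,v₄), (v₃,v₁), (v₃,v₂), (v₄,v₃)`. -/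
def maeharaDigraph : Fin 4 → Fin 4 → Prop := fun i j =>
  (i = 0 ∧ j = 1) ∨ (i = 1 ∧ j = 2) ∨ (i = 1 ∧ j = 3) ∨
  (i = 2 ∧ j = 0) ∨ (i = 2 ∧ j = 1) ∨ (i = 3 ∧ j = 2)

/-- In a central representation, an arc `u → v` together with a non-arc `v → u`
forces the interval of `v` to be strictly shorter than that of `u`. -/
lemma center_shrink (au bu av bv : ℝ) (h1 : au ≤ (av + bv) / 2)
    (h2 : (av + bv) / 2 ≤ bu) (h3 : ¬ ((au + bu) / 2 ∈ Set.Icc av bv)) :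
    bv - av < bu - au := by
  simp only [Set.mem_Icc, not_and, not_le] at h3
  rcases le_or_gt av ((au + bu) / 2) with h | h
  · linarith [h3 h]
  · linarith

/-- The above digraph is an interval catch digraph but not a central interval catch
digraph. -/
theorem maeharaDigraph_icd_not_cicd :
    IsICD maeharaDigraph ∧ ¬ IsCICD maeharaDigraph := by
  constructor
  · refine ⟨![0, 1, 0, 2], ![1, 4, 2, 4], ![0, 1, 2, 4], ?_, ?_, ?_⟩
    · intro u; fin_cases u <;> norm_num
    · intro u; fin_cases u <;> norm_num
    · intro u v huv
      fin_cases u <;> fin_cases v <;>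
        simp_all [maeharaDigraph, Set.mem_Icc] <;> norm_num
  · rintro ⟨a, b, hab, hmem, harc⟩
    -- arcs
    have a01 : (a 1 + b 1) / 2 ∈ Set.Icc (a 0) (b 0) :=
      (harc 0 1 (by decide)).mp (Or.inl ⟨rfl, rfl⟩)
    have a20 : (a 0 + b 0) / 2 ∈ Set.Icc (a 2) (b 2) :=
      (harc 2 0 (by decide)).mp (by simp [maeharaDigraph])
    have a32 : (a 2 + b 2) / 2 ∈ Set.Icc (a 3) (b 3) :=
      (harc 3 2 (by decide)).mp (by simp [maeharaDigraph])
    have a13 : (a 3 + b 3) / 2 ∈ Set.Icc (a 1) (b 1) :=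
      (harc 1 3 (by decide)).mp (by simp [maeharaDigraph])
    -- non-arcs
    have n10 : ¬ ((a 0 + b 0) / 2 ∈ Set.Icc (a 1) (b 1)) := by
      intro h
      exact (by simp [maeharaDigraph] : ¬ maeharaDigraph 1 0)
        ((harc 1 0 (by decide)).mpr h)
    have n02 : ¬ ((a 2 + b 2) / 2 ∈ Set.Icc (a 0) (b 0)) := by
      intro h
      exact (by simp [maeharaDigraph] : ¬ maeharaDigraph 0 2)
        ((harc 0 2 (by decide)).mpr h)
    have n23 : ¬ ((a 3 + b 3) / 2 ∈ Set.Icc (a 2) (b 2)) := by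
      intro h
      exact (by simp [maeharaDigraph] : ¬ maeharaDigraph 2 3)
        ((harc 2 3 (by decide)).mpr h)
    have n31 : ¬ ((a 1 + b 1) / 2 ∈ Set.Icc (a 3) (b 3)) := by
      intro h
      exact (by simp [maeharaDigraph] : ¬ maeharaDigraph 3 1)
        ((harc 3 1 (by decide)).mpr h)
    have h1 : b 1 - a 1 < b 0 - a 0 := center_shrink _ _ _ _ a01.1 a01.2 n10
    have h2 : b 0 - a 0 < b 2 - a 2 := center_shrink _ _ _ _ a20.1 a20.2 n02
    have h3 : b 2 - a 2 < b 3 - a 3 := center_shrink _ _ _ _ a32.1 a32.2 n23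
    have h4 : b 3 - a 3 < b 1 - a 1 := center_shrink _ _ _ _ a13.1 a13.2 n31
    linarith
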